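/- For pure octonions a, b, x, the standard derivation satisfies D_{a,b}(x) = 3⟨a,x⟩b - 3⟨b,x⟩a + (1/2) x*(a*b). -/

import Mathlib

/-- An octonion algebra over `k`: an 8-dimensional unital (not necessarily associative)
`k`-algebra with a nondegenerate multiplicative quadratic form `N`. -/
structure OctonionAlgebra (k : Type) [Field k] (A : Type) [AddCommGroup A] [Module k A] where
  mul : A → A → A
  e : A
  N : A → k
  add_mul' : ∀ a b c : A, mul (a + b) c = mul a c + mul b c
  mul_add' : ∀ a b c : A, mul a (b + c) = mul a b + mul a c
  smul_mul' : ∀ (t : k) (a b : A), mul (t • a) b = t • mul a b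
  mul_smul' : ∀ (t : k) (a b : A), mul a (t • b) = t • mul a b
  one_mul' : ∀ a : A, mul e a = a
  mul_one' : ∀ a : A, mul a e = a
  dim_eq : Module.finrank k A = 8
  N_smul : ∀ (t : k) (a : A), N (t • a) = t ^ 2 * N a
  polar_add_left : ∀ a b c : A,
    N (a + b + c) - N (a + b) - N c = (N (a + c) - N a - N c) + (N (b + c) - N b - N c)
  polar_smul_left : ∀ (t : k) (a b : A),
    N (t • a + b) - N (t • a) - N b = t * (N (a + b) - N a - N b)
  nondeg : ∀ a : A, (∀ b : A, N (a + b) - N a - N b = 0) → a = 0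
  N_mul : ∀ a b : A, N (mul a b) = N a * N b

namespace OctonionAlgebra

variable {k : Type} [Field k] {A : Type} [AddCommGroup A] [Module k A]

/-- The bilinear form associated to the norm: `⟨x,y⟩ = N(x+y) - N(x) - N(y)`. -/
def inner (O : OctonionAlgebra k A) (x y : A) : k := O.N (x + y) - O.N x - O.N y

/-- The standard involution `x̄ = ⟨x,e⟩e - x`. -/
def conj (O : OctonionAlgebra k A) (x : A) : A := O.inner x O.e • O.e - x

/-- The Malcev product `a*b = ab - ba`. -/
def malcev (O : OctonionAlgebra k A) (a b : A) : A := O.mul a b - O.mul b a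

/-- The associator `{a,x,b} = (ax)b - a(xb)`. -/
def assoc (O : OctonionAlgebra k A) (a x b : A) : A :=
  O.mul (O.mul a x) b - O.mul a (O.mul x b)

/-- The standard derivation `D_{a,b} = [L_a,L_b] + [L_a,R_b] + [R_a,R_b]`, as a function. -/
def D (O : OctonionAlgebra k A) (a b x : A) : A :=
  O.mul a (O.mul b x) - O.mul b (O.mul a x)
  + O.mul a (O.mul x b) - O.mul (O.mul a x) b
  + O.mul (O.mul x b) a - O.mul (O.mul x a) b

end OctonionAlgebra

/-!
Polarizing the composition law `N(uv) = N(u) N(v)` gives the Kirmse identities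
`u(uv) = t(u) uv - N(u) v` and `(vu)u = t(u) vu - N(u) v`, where `t(u) = ⟨u, e⟩`. Hence the
associator is alternating, and expanding `D_{a,b}` gives Schafer's formula
`D_{a,b} x = [[a,b],x] - 3 (a,b,x)`. When `a` and `b` are pure, the linearized Kirmse identities give
`[[a,b],x] = 2 (a,b,x) + 2⟨a,x⟩b - 2⟨b,x⟩a`, and eliminating the associator yields the claim.
-/

namespace OctonionAlgebra

variable {k : Type} [Field k] {A : Type} [AddCommGroup A] [Module k A] (O : OctonionAlgebra k A)

theorem inner_comm (x y : A) : O.inner x y = O.inner y x := by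
  unfold inner; rw [add_comm]; ring

theorem inner_add_left (x y z : A) : O.inner (x + y) z = O.inner x z + O.inner y z :=
  O.polar_add_left x y z

theorem inner_smul_left (t : k) (x y : A) : O.inner (t • x) y = t * O.inner x y :=
  O.polar_smul_left t x y

theorem inner_add_right (x y z : A) : O.inner x (y + z) = O.inner x y + O.inner x z := by
  rw [O.inner_comm x, O.inner_add_left, O.inner_comm y, O.inner_comm z]

theorem inner_neg_left (x y : A) : O.inner (-x) y = -O.inner x y := by
  rw [← neg_one_smul k x, O.inner_smul_left, neg_one_mul]

theorem inner_sub_left (x y z : A) : O.inner (x - y) z = O.inner x z - O.inner y z := by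
  rw [sub_eq_add_neg, O.inner_add_left, O.inner_neg_left, ← sub_eq_add_neg]

theorem N_add (x y : A) : O.N (x + y) = O.N x + O.N y + O.inner x y := by
  unfold inner; ring

theorem ext_inner_right {x y : A} (h : ∀ z, O.inner x z = O.inner y z) : x = y := by
  rw [← sub_eq_zero]
  exact O.nondeg _ fun z => by
    change O.inner (x - y) z = 0
    rw [O.inner_sub_left, h, sub_self]

theorem mul_neg' (a b : A) : O.mul a (-b) = -O.mul a b := by
  rw [← neg_one_smul k b, O.mul_smul', neg_one_smul]

theorem neg_mul' (a b : A) : O.mul (-a) b = -O.mul a b := by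
  rw [← neg_one_smul k a, O.smul_mul', neg_one_smul]

theorem mul_sub' (a b c : A) : O.mul a (b - c) = O.mul a b - O.mul a c := by
  rw [sub_eq_add_neg, O.mul_add', O.mul_neg', ← sub_eq_add_neg]

theorem sub_mul' (a b c : A) : O.mul (a - b) c = O.mul a c - O.mul b c := by
  rw [sub_eq_add_neg, O.add_mul', O.neg_mul', ← sub_eq_add_neg]

theorem inner_mul_mul_same_right (u w y : A) :
    O.inner (O.mul u y) (O.mul w y) = O.inner u w * O.N y := by
  have h := O.N_mul (u + w) y
  rw [O.add_mul', O.N_add, O.N_add, O.N_mul, O.N_mul] at h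
  linear_combination h

theorem inner_mul_mul_same_left (u v z : A) :
    O.inner (O.mul u v) (O.mul u z) = O.N u * O.inner v z := by
  have h := O.N_mul u (v + z)
  rw [O.mul_add', O.N_add, O.N_add, O.N_mul, O.N_mul] at h
  linear_combination h

theorem inner_mul_mul_add_inner_mul_mul (u v w z : A) :
    O.inner (O.mul u v) (O.mul w z) + O.inner (O.mul u z) (O.mul w v)
      = O.inner u w * O.inner v z := by
  have h := O.inner_mul_mul_same_right u w (v + z)
  rw [O.mul_add', O.mul_add', O.inner_add_left, O.inner_add_right, O.inner_add_right,
    O.N_add, O.inner_mul_mul_same_right, O.inner_mul_mul_same_right] at h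
  linear_combination h

theorem inner_mul_left_swap (u v z : A) :
    O.inner (O.mul u v) z = O.inner u O.e * O.inner v z - O.inner (O.mul u z) v := by
  have h := O.inner_mul_mul_add_inner_mul_mul u v O.e z
  rw [O.one_mul', O.one_mul'] at h
  linear_combination h

theorem inner_mul_right_swap (u v z : A) :
    O.inner (O.mul u v) z = O.inner u z * O.inner v O.e - O.inner u (O.mul z v) := by
  have h := O.inner_mul_mul_add_inner_mul_mul u v z O.e
  rw [O.mul_one', O.mul_one'] at h
  linear_combination h

theorem mul_mul_self_left (u v : A) :
    O.mul u (O.mul u v) = O.inner u O.e • O.mul u v - O.N u • v := by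
  refine O.ext_inner_right fun z => ?_
  rw [O.inner_sub_left, O.inner_smul_left, O.inner_smul_left]
  linear_combination O.inner_mul_left_swap u (O.mul u v) z - O.inner_mul_mul_same_left u z v
    - O.N u * O.inner_comm z v

theorem mul_mul_self_right (u v : A) :
    O.mul (O.mul v u) u = O.inner u O.e • O.mul v u - O.N u • v := by
  refine O.ext_inner_right fun z => ?_
  rw [O.inner_sub_left, O.inner_smul_left, O.inner_smul_left]
  linear_combination O.inner_mul_right_swap (O.mul v u) u z - O.inner_mul_mul_same_right v z u

theorem mul_mul_add_swap_left (u w v : A) :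
    O.mul u (O.mul w v) + O.mul w (O.mul u v)
      = O.inner u O.e • O.mul w v + O.inner w O.e • O.mul u v - O.inner u w • v := by
  have h := O.mul_mul_self_left (u + w) v
  simp only [O.add_mul', O.mul_add', O.N_add, O.inner_add_left] at h
  linear_combination (norm := module) h - O.mul_mul_self_left u v - O.mul_mul_self_left w v

theorem mul_mul_add_swap_right (u w v : A) :
    O.mul (O.mul v u) w + O.mul (O.mul v w) u
      = O.inner u O.e • O.mul v w + O.inner w O.e • O.mul v u - O.inner u w • v := by
  have h := O.mul_mul_self_right (u + w) v
  simp only [O.add_mul', O.mul_add', O.N_add, O.inner_add_left] at h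
  linear_combination (norm := module) h - O.mul_mul_self_right u v - O.mul_mul_self_right w v

theorem mul_add_mul_swap (u w : A) :
    O.mul u w + O.mul w u = O.inner u O.e • w + O.inner w O.e • u - O.inner u w • O.e := by
  simpa only [O.mul_one'] using O.mul_mul_add_swap_left u w O.e

theorem mul_mul_add_mul_mul_swap_left (p u w : A) :
    O.mul p (O.mul u w) + O.mul p (O.mul w u)
      = O.inner u O.e • O.mul p w + O.inner w O.e • O.mul p u - O.inner u w • p := by
  rw [← O.mul_add', O.mul_add_mul_swap, O.mul_sub', O.mul_add', O.mul_smul', O.mul_smul',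
    O.mul_smul', O.mul_one']

theorem mul_mul_add_mul_mul_swap_right (p u w : A) :
    O.mul (O.mul u w) p + O.mul (O.mul w u) p
      = O.inner u O.e • O.mul w p + O.inner w O.e • O.mul u p - O.inner u w • p := by
  rw [← O.add_mul', O.mul_add_mul_swap, O.sub_mul', O.add_mul', O.smul_mul', O.smul_mul',
    O.smul_mul', O.one_mul']

theorem assoc_swap_left (u w v : A) : O.assoc w u v = -O.assoc u w v := by
  rw [eq_neg_iff_add_eq_zero]
  unfold assoc
  linear_combination (norm := module)
    O.mul_mul_add_mul_mul_swap_right v u w - O.mul_mul_add_swap_left u w v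

theorem assoc_swap_right (u v w : A) : O.assoc u w v = -O.assoc u v w := by
  rw [eq_neg_iff_add_eq_zero]
  unfold assoc
  linear_combination (norm := module)
    O.mul_mul_add_swap_right v w u - O.mul_mul_add_mul_mul_swap_left u v w

theorem malcev_comm (u v : A) : O.malcev u v = -O.malcev v u := by
  unfold malcev; abel

theorem D_eq_malcev_malcev_sub_assoc (a b x : A) :
    O.D a b x = O.malcev (O.malcev a b) x - (3 : k) • O.assoc a b x := by
  have hba : O.assoc b a x = -O.assoc a b x := O.assoc_swap_left a b x
  have hxb : O.assoc a x b = -O.assoc a b x := O.assoc_swap_right a b x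
  have hxab : O.assoc x a b = O.assoc a b x := by
    rw [O.assoc_swap_left, O.assoc_swap_right, neg_neg]
  have hxba : O.assoc x b a = -O.assoc a b x := by rw [O.assoc_swap_right, hxab]
  unfold D malcev assoc at *
  rw [O.sub_mul', O.mul_sub']
  linear_combination (norm := module) hba - hxb + hxba - hxab

theorem mul_mul_eq_of_inner_e_eq_zero {a b : A} (ha : O.inner a O.e = 0)
    (hb : O.inner b O.e = 0) (x : A) :
    O.mul x (O.mul a b) = O.mul a (O.mul b x) + O.inner x b • a - O.inner a x • b := by
  linear_combination (norm := module) O.mul_mul_add_swap_left a x b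
    - O.mul_mul_add_mul_mul_swap_left a x b + ha • O.mul x b - hb • O.mul a x

theorem malcev_malcev_eq_of_inner_e_eq_zero {a b : A} (ha : O.inner a O.e = 0)
    (hb : O.inner b O.e = 0) (x : A) :
    O.malcev (O.malcev a b) x
      = (2 : k) • (O.assoc a b x + O.inner a x • b - O.inner b x • a) := by
  unfold malcev assoc
  rw [O.sub_mul', O.mul_sub', O.inner_comm b x]
  linear_combination (norm := module) -O.mul_mul_add_mul_mul_swap_right x a b
    + O.mul_mul_add_mul_mul_swap_left x a b - (2 : k) • O.mul_mul_eq_of_inner_e_eq_zero ha hb x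
    - ha • O.mul b x - hb • O.mul a x + ha • O.mul x b + hb • O.mul x a

end OctonionAlgebra

theorem stmt4_general {k A : Type} [Field k] [AddCommGroup A] [Module k A]
    (h2 : (2 : k) ≠ 0) (O : OctonionAlgebra k A) :
    ∀ a b x : A, O.inner a O.e = 0 → O.inner b O.e = 0 → O.inner x O.e = 0 →
      O.D a b x
        = (3 * O.inner a x) • b - (3 * O.inner b x) • a
          + (2 : k)⁻¹ • O.malcev x (O.malcev a b) := by
  intro a b x ha hb hx
  rw [O.D_eq_malcev_malcev_sub_assoc, O.malcev_comm x,
    O.malcev_malcev_eq_of_inner_e_eq_zero ha hb, smul_neg, smul_smul, inv_mul_cancel₀ h2, one_smul]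
  module

/-- For pure octonions `a, b, x`, the standard derivation satisfies
`D_{a,b}(x) = 3⟨a,x⟩b - 3⟨b,x⟩a + (1/2) x*(a*b)`. -/
theorem stmt4 {k A : Type} [Field k] [AddCommGroup A] [Module k A]
    (h2 : (2 : k) ≠ 0) (h3 : (3 : k) ≠ 0) (O : OctonionAlgebra k A) :
    ∀ a b x : A, O.inner a O.e = 0 → O.inner b O.e = 0 → O.inner x O.e = 0 →
      O.D a b x
        = (3 * O.inner a x) • b - (3 * O.inner b x) • a
          + (2 : k)⁻¹ • O.malcev x (O.malcev a b) :=
  stmt4_general h2 O
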